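/- arXiv:2604.15191 — 3 statements merged into one kernel-verified Lean document; each statement's English description precedes it below -/
import Mathlib

section
/- For every ε > 0 and every x ∈ 𝕋^d, the map y ↦ c_ε(x,y) is 1-semiconcave on 𝕋^d; explicitly, for all λ ∈ [0,1], all y₁, y₂ ∈ 𝕋^d, and every z ∈ 𝕋^d with dist(z,y₁) = λ·dist(y₁,y₂) and dist(z,y₂) = (1−λ)·dist(y₁,y₂), one has c_ε(x,z) ≥ (1−λ)·c_ε(x,y₁) + λ·c_ε(x,y₂) − (1/2)·λ(1−λ)·dist(y₁,y₂)². -/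
open MeasureTheory Real

noncomputable section

instance : Fact ((0:ℝ) < 2 * Real.pi) := ⟨by positivity⟩

/-- The flat torus `𝕋^d = ℝ^d / (2πℤ)^d`, as a product of additive circles. -/
abbrev Torus (d : ℕ) : Type := Fin d → AddCircle (2 * Real.pi)

namespace Torus

variable {d : ℕ}

/-- The canonical lift of a torus point to `ℝ^d` (componentwise representative in `[0, 2π)`). -/
noncomputable def lift (x : Torus d) : Fin d → ℝ :=
  fun i => (AddCircle.equivIco (2 * Real.pi) 0 (x i) : ℝ)

/-- The flat torus distance `dist(x,y) = min_{k ∈ ℤ^d} ‖x - y - 2πk‖` (Euclidean norm). -/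
noncomputable def tdist (x y : Torus d) : ℝ :=
  ⨅ k : Fin d → ℤ, Real.sqrt (∑ i, (lift x i - lift y i - 2 * Real.pi * (k i)) ^ 2)

/-- The Gaussian (heat) kernel `K_ε` on the torus. -/
noncomputable def gker (ε : ℝ) (x : Torus d) : ℝ :=
  (2 * Real.pi * ε) ^ (-(d : ℝ) / 2) *
    ∑' k : Fin d → ℤ,
      Real.exp (-(∑ i, (lift x i - 2 * Real.pi * (k i)) ^ 2) / (2 * ε))

/-- The cost function `c_ε(x,y) = -ε log K_ε(x - y)`. -/
noncomputable def cost (ε : ℝ) (x y : Torus d) : ℝ := -(ε * Real.log (gker ε (x - y)))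

/-- The operator `𝒯_μ^ε[φ](y) = -ε log ∫ exp((φ(x) - c_ε(x,y))/ε) dμ(x)`. -/
noncomputable def Tmap (ε : ℝ) (μ : Measure (Torus d)) (φ : Torus d → ℝ) (y : Torus d) : ℝ :=
  -(ε * Real.log (∫ x, Real.exp ((φ x - cost ε x y) / ε) ∂μ))

/-- The Schrödinger functional `I_{μ,ν}^ε[φ] = ∫ φ dμ + ∫ 𝒯_μ^ε[φ] dν`. -/
noncomputable def SchFun (ε : ℝ) (μ ν : Measure (Torus d)) (φ : Torus d → ℝ) : ℝ :=
  (∫ x, φ x ∂μ) + ∫ y, Tmap ε μ φ y ∂ν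

/-- The Schrödinger functional `Ī_{μ,ν}^ε[ψ] = ∫ 𝒯_ν^ε[ψ] dμ + ∫ ψ dν`. -/
noncomputable def SchFunBar (ε : ℝ) (μ ν : Measure (Torus d)) (ψ : Torus d → ℝ) : ℝ :=
  (∫ x, Tmap ε ν ψ x ∂μ) + ∫ y, ψ y ∂ν

/-- `(φ, ψ)` is a pair of Schrödinger potentials for `(μ, ν, ε)`. -/
structure IsSchrodingerPotentials (ε : ℝ) (μ ν : Measure (Torus d))
    (φ ψ : Torus d → ℝ) : Prop where
  cont_phi : Continuous φ
  cont_psi : Continuous ψ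
  eq_psi : ψ = Tmap ε μ φ
  eq_phi : φ = Tmap ε ν ψ
  max_phi : ∀ g : Torus d → ℝ, Continuous g → SchFun ε μ ν g ≤ SchFun ε μ ν φ
  max_psi : ∀ g : Torus d → ℝ, Continuous g → SchFunBar ε μ ν g ≤ SchFunBar ε μ ν ψ

/-- Variance of `f` under the probability measure `m`. -/
noncomputable def Var (m : Measure (Torus d)) (f : Torus d → ℝ) : ℝ :=
  ∫ x, (f x - ∫ y, f y ∂m) ^ 2 ∂m

/-- Oscillation `osc f = sup f - inf f`. -/
noncomputable def osc (f : Torus d → ℝ) : ℝ := (⨆ x, f x) - ⨅ x, f x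

/-- `μ` has density `f` with respect to the Lebesgue (Haar) measure on the torus. -/
def HasDensity (μ : Measure (Torus d)) (f : Torus d → ℝ) : Prop :=
  μ = (volume : Measure (Torus d)).withDensity (fun x => ENNReal.ofReal (f x))

end Torus

open Torus
namespace Torus

variable {d : ℕ}

/-- The probability measure `π_y[φ]`, with density
`exp((φ(x) - c_ε(x,y))/ε) / ∫ exp((φ(x') - c_ε(x',y))/ε) dμ(x')` with respect to `μ`. -/
noncomputable def piY (ε : ℝ) (μ : Measure (Torus d)) (φ : Torus d → ℝ) (y : Torus d) :
    Measure (Torus d) :=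
  μ.withDensity fun x => ENNReal.ofReal
    (Real.exp ((φ x - cost ε x y) / ε) / ∫ x', Real.exp ((φ x' - cost ε x' y) / ε) ∂μ)

/-- The probability measure `π^ν[φ] : A ↦ ∫ π_y[φ](A) dν(y)`. -/
noncomputable def piNu (ε : ℝ) (μ ν : Measure (Torus d)) (φ : Torus d → ℝ) :
    Measure (Torus d) :=
  ν.bind fun y => piY ε μ φ y

/-- The probability measure `γ_Q` on the torus, with density proportional to
`1_{B(x₀,r)}(x) exp(-dist(x₀,x)²/α)`. -/
noncomputable def gammaQ (x₀ : Torus d) (r α : ℝ) : Measure (Torus d) :=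
  ((volume.withDensity fun x => ENNReal.ofReal
      (if tdist x₀ x < r then Real.exp (-(tdist x₀ x) ^ 2 / α) else 0)) Set.univ)⁻¹ •
    (volume.withDensity fun x => ENNReal.ofReal
      (if tdist x₀ x < r then Real.exp (-(tdist x₀ x) ^ 2 / α) else 0))

/-- Normalized restriction `ν_Q(A) = ν(A ∩ Q) / ν(Q)`. -/
noncomputable def normRestrict (ν : Measure (Torus d)) (Q : Set (Torus d)) :
    Measure (Torus d) :=
  (ν Q)⁻¹ • ν.restrict Q

open Classical in
/-- Kullback–Leibler divergence: `KL(P‖Q) = ∫ log(dP/dQ) dP` if `P ≪ Q`, `+∞` otherwise. -/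
noncomputable def KLdiv {α : Type*} [MeasurableSpace α] (P Q : Measure α) : EReal :=
  if P ≪ Q then ((∫ x, Real.log ((P.rnDeriv Q x).toReal) ∂P : ℝ) : EReal) else ⊤

/-- Convolution with the Gaussian kernel: `(K_ε ∗ f)(x) = ∫ K_ε(x - y) f(y) dy`. -/
noncomputable def gconv (ε : ℝ) (f : Torus d → ℝ) (x : Torus d) : ℝ :=
  ∫ y, gker ε (x - y) * f y

/-- The measure `π_{μ,ε}` on `𝕋^d × 𝕋^d` given by `dπ_{μ,ε}(x,y) = K_ε(y - x) dy dμ(x)`. -/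
noncomputable def piProd (ε : ℝ) (μ : Measure (Torus d)) : Measure (Torus d × Torus d) :=
  (μ.prod (volume : Measure (Torus d))).withDensity fun p =>
    ENNReal.ofReal (gker ε (p.2 - p.1))

end Torus
/-!
Up to an additive constant, `c_ε(x, y)` is `-ε log G(v)` for any lift `v ∈ ℝ^d` of `x - y`, where
`G(v) = ∑_k exp(-|v - 2πk|² / (2ε))` is the periodised Gaussian. For `w = (1-λ)a + λb`, the
summand of `G(w)` at `k` is `exp(λ(1-λ)|a-b|²/(2ε))` times the weighted geometric mean of the
summands of `G(a)` and `G(b)`, so Hölder's inequality makes `v ↦ ε log G(v) + |v|²/2` convex.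

If `z` splits `[y₁, y₂]` in the ratio `λ : 1-λ`, the shortest lifts `r`, `s` of `z - y₁`, `z - y₂`
have lengths `λD`, `(1-λ)D` while `|r - s| ≥ D`; this forces `(1-λ)r + λs = 0`. Hence a lift of
`x - z` is the `λ`-convex combination of lifts `a`, `b` of `x - y₁`, `x - y₂` with `|a - b| = D`.
-/

open Real

lemma summable_fin_pi_prod_of_nonneg {α : Type*} :
    ∀ {n : ℕ} {f : Fin n → α → ℝ}, (∀ i a, 0 ≤ f i a) → (∀ i, Summable (f i)) →
      Summable fun k : Fin n → α => ∏ i, f i (k i)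
  | 0, _, _, _ => Summable.of_finite
  | n + 1, f, hf0, hf => by
    rw [← (Fin.consEquiv fun _ => α).summable_iff]
    have := (hf 0).mul_of_nonneg (summable_fin_pi_prod_of_nonneg (f := fun i => f i.succ)
      (fun i => hf0 i.succ) fun i => hf i.succ) (hf0 0)
      fun k => Finset.prod_nonneg fun i _ => hf0 _ _
    simpa [Function.comp_def, Fin.prod_univ_succ] using this

lemma summable_exp_neg_sq_sub_two_pi_mul_int {ε : ℝ} (hε : 0 < ε) (c : ℝ) :
    Summable fun n : ℤ => exp (-(c - 2 * π * n) ^ 2 / (2 * ε)) := by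
  refine (HurwitzKernelBounds.summable_f_int 0 (-c / (2 * π)) (t := 2 * π / ε)
    (by positivity)).congr fun n => ?_
  rw [HurwitzKernelBounds.f_int, pow_zero, one_mul]
  congr 1
  field_simp
  ring

lemma tsum_rpow_mul_rpow_le {ι : Type*} {f g : ι → ℝ} (hf : ∀ i, 0 ≤ f i) (hg : ∀ i, 0 ≤ g i)
    (hf_sum : Summable f) (hg_sum : Summable g) {θ : ℝ} (h0 : 0 ≤ θ) (h1 : θ ≤ 1) :
    ∑' i, f i ^ (1 - θ) * g i ^ θ ≤ (∑' i, f i) ^ (1 - θ) * (∑' i, g i) ^ θ := by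
  rcases h0.eq_or_lt with rfl | h0
  · simp
  rcases h1.eq_or_lt with rfl | h1
  · simp
  have h1' : 1 - θ ≠ 0 := by linarith
  have := inner_le_Lp_mul_Lq_tsum_of_nonneg (HolderConjugate.one_sub_inv_inv h0 h1)
    (f := fun i => f i ^ (1 - θ)) (g := fun i => g i ^ θ) (fun i => rpow_nonneg (hf i) _)
    (fun i => rpow_nonneg (hg i) _) (by simpa [rpow_rpow_inv (hf _) h1'] using hf_sum)
    (by simpa [rpow_rpow_inv (hg _) h0.ne'] using hg_sum)
  simpa [rpow_rpow_inv (hf _) h1', rpow_rpow_inv (hg _) h0.ne'] using this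

lemma sum_convex_comb_sub_sq {ι : Type*} [Fintype ι] (θ : ℝ) (a b c : ι → ℝ) :
    ∑ i, ((1 - θ) * a i + θ * b i - c i) ^ 2 =
      (1 - θ) * ∑ i, (a i - c i) ^ 2 + θ * ∑ i, (b i - c i) ^ 2 -
        θ * (1 - θ) * ∑ i, (a i - b i) ^ 2 := by
  simp only [Finset.mul_sum, ← Finset.sum_add_distrib, ← Finset.sum_sub_distrib]
  exact Finset.sum_congr rfl fun i _ => by ring

lemma convex_comb_eq_zero_of_sqrt_sum_sq {ι : Type*} [Fintype ι] {θ D : ℝ} (h0 : 0 ≤ θ)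
    (h1 : θ ≤ 1) {r s : ι → ℝ} (hr : √(∑ i, r i ^ 2) = θ * D)
    (hs : √(∑ i, s i ^ 2) = (1 - θ) * D) (hD : D ≤ √(∑ i, (r i - s i) ^ 2)) :
    (∀ i, (1 - θ) * r i + θ * s i = 0) ∧
      θ * (1 - θ) * ∑ i, (r i - s i) ^ 2 = θ * (1 - θ) * D ^ 2 := by
  have hD0 : 0 ≤ D := by linarith [sqrt_nonneg (∑ i, r i ^ 2), sqrt_nonneg (∑ i, s i ^ 2)]
  rw [sqrt_eq_iff_eq_sq (by positivity) (by nlinarith)] at hr hs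
  rw [le_sqrt hD0 (by positivity)] at hD
  have hid := sum_convex_comb_sub_sq θ r s 0
  simp only [Pi.zero_apply, sub_zero] at hid
  have hsq : ∑ i, ((1 - θ) * r i + θ * s i) ^ 2 = 0 :=
    le_antisymm (by nlinarith [mul_nonneg h0 (sub_nonneg.2 h1)]) (by positivity)
  refine ⟨fun i => ?_, by linear_combination hid - hsq + (1 - θ) * hr + θ * hs⟩
  exact pow_eq_zero_iff two_ne_zero |>.1 <|
    (Finset.sum_eq_zero_iff_of_nonneg fun i _ => sq_nonneg _).1 hsq i (Finset.mem_univ i)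

lemma sq_sub_mul_round_le {p : ℝ} (hp : 0 < p) (c : ℝ) (n : ℤ) :
    (c - p * round (c / p)) ^ 2 ≤ (c - p * n) ^ 2 := by
  have key : ∀ m : ℤ, c - p * m = p * (c / p - m) := fun m => by field_simp
  rw [sq_le_sq, key, key, abs_mul, abs_mul]
  exact mul_le_mul_of_nonneg_left (round_le _ n) (abs_nonneg p)

namespace Torus

variable {d : ℕ}

def proj : (Fin d → ℝ) →+ Torus d :=
  AddMonoidHom.compLeft (QuotientAddGroup.mk' (AddSubgroup.zmultiples (2 * π))) (Fin d)

@[simp]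
lemma proj_apply (t : Fin d → ℝ) (i : Fin d) : proj t i = (t i : AddCircle (2 * π)) := rfl

@[simp]
lemma proj_lift (x : Torus d) : proj (lift x) = x :=
  funext fun i => (AddCircle.equivIco (2 * π) 0).symm_apply_apply (x i)

lemma proj_eq_zero_iff {t : Fin d → ℝ} :
    proj t = 0 ↔ ∃ k : Fin d → ℤ, ∀ i, t i = 2 * π * k i := by
  simp only [funext_iff, proj_apply, Pi.zero_apply, AddCircle.coe_eq_zero_iff, zsmul_eq_mul,
    Classical.skolem, eq_comm (b := t _), mul_comm (2 * π)]

lemma tdist_le_of_proj_eq {p q : Torus d} {t : Fin d → ℝ} (h : proj t = p - q) :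
    tdist p q ≤ √(∑ i, t i ^ 2) := by
  obtain ⟨k, hk⟩ := proj_eq_zero_iff.1 (show proj (t - (lift p - lift q)) = 0 by simp [h])
  refine (ciInf_le ⟨0, ?_⟩ (-k)).trans_eq ?_
  · rintro _ ⟨k, rfl⟩
    positivity
  · congr 1
    refine Finset.sum_congr rfl fun i _ => ?_
    have := hk i
    simp only [Pi.sub_apply, Pi.neg_apply, Int.cast_neg] at this ⊢
    congr 1
    linarith

lemma exists_proj_eq_sqrt_eq_tdist (p q : Torus d) :
    ∃ t : Fin d → ℝ, proj t = p - q ∧ √(∑ i, t i ^ 2) = tdist p q := by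
  set c := lift p - lift q
  set t : Fin d → ℝ := fun i => c i - 2 * π * round (c i / (2 * π))
  have ht : proj t = p - q := by
    have : proj (t - c) = 0 := proj_eq_zero_iff.2 ⟨fun i => -round (c i / (2 * π)), fun i => by
      simp [t]⟩
    rwa [map_sub, sub_eq_zero, map_sub, proj_lift, proj_lift] at this
  refine ⟨t, ht, le_antisymm (le_ciInf fun k => ?_) (tdist_le_of_proj_eq ht)⟩
  exact sqrt_le_sqrt (Finset.sum_le_sum fun i _ => sq_sub_mul_round_le two_pi_pos _ _)

def gaussSum (ε : ℝ) (v : Fin d → ℝ) : ℝ :=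
  ∑' k : Fin d → ℤ, exp (-(∑ i, (v i - 2 * π * k i) ^ 2) / (2 * ε))

section gaussSum

variable {ε : ℝ} (hε : 0 < ε)
include hε

lemma summable_gaussSum (v : Fin d → ℝ) :
    Summable fun k : Fin d → ℤ => exp (-(∑ i, (v i - 2 * π * k i) ^ 2) / (2 * ε)) := by
  simpa only [← exp_sum, Finset.sum_div, ← Finset.sum_neg_distrib, neg_div] using
    summable_fin_pi_prod_of_nonneg (fun i n => (exp_pos _).le)
      fun i => summable_exp_neg_sq_sub_two_pi_mul_int hε (v i)

lemma gaussSum_pos (v : Fin d → ℝ) : 0 < gaussSum ε v :=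
  (summable_gaussSum hε v).tsum_pos (fun _ => (exp_pos _).le) 0 (exp_pos _)

omit hε in
lemma gaussSum_eq_of_proj_eq {u v : Fin d → ℝ} (h : proj u = proj v) :
    gaussSum ε u = gaussSum ε v := by
  obtain ⟨m, hm⟩ := proj_eq_zero_iff.1 (show proj (u - v) = 0 by rw [map_sub, h, sub_self])
  rw [gaussSum, gaussSum, ← (Equiv.addRight m).tsum_eq]
  refine tsum_congr fun k => ?_
  have hi : ∀ i, u i - 2 * π * (k + m) i = v i - 2 * π * k i := fun i => by
    have := hm i
    simp only [Pi.sub_apply, Pi.add_apply, Int.cast_add] at this ⊢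
    linarith
  simp only [Equiv.coe_addRight, hi]

lemma mul_log_gaussSum_convex_comb_le {θ : ℝ} (h0 : 0 ≤ θ) (h1 : θ ≤ 1) (a b : Fin d → ℝ) :
    ε * log (gaussSum ε fun i => (1 - θ) * a i + θ * b i) ≤
      (1 - θ) * (ε * log (gaussSum ε a)) + θ * (ε * log (gaussSum ε b)) +
        θ * (1 - θ) / 2 * ∑ i, (a i - b i) ^ 2 := by
  set K := θ * (1 - θ) * (∑ i, (a i - b i) ^ 2) / (2 * ε)
  set F : (Fin d → ℝ) → (Fin d → ℤ) → ℝ :=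
    fun v k => exp (-(∑ i, (v i - 2 * π * k i) ^ 2) / (2 * ε))
  have hterm : ∀ k, F (fun i => (1 - θ) * a i + θ * b i) k =
      exp K * (F a k ^ (1 - θ) * F b k ^ θ) := fun k => by
    simp only [F, K, ← exp_mul, ← exp_add, sum_convex_comb_sub_sq]
    congr 1
    field_simp
    ring
  have hG : gaussSum ε (fun i => (1 - θ) * a i + θ * b i) ≤
      exp K * (gaussSum ε a ^ (1 - θ) * gaussSum ε b ^ θ) :=
    calc gaussSum ε (fun i => (1 - θ) * a i + θ * b i)
        = exp K * ∑' k, F a k ^ (1 - θ) * F b k ^ θ := by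
          rw [gaussSum, ← tsum_mul_left]
          exact tsum_congr hterm
      _ ≤ exp K * (gaussSum ε a ^ (1 - θ) * gaussSum ε b ^ θ) :=
          mul_le_mul_of_nonneg_left (tsum_rpow_mul_rpow_le (fun _ => (exp_pos _).le)
            (fun _ => (exp_pos _).le) (summable_gaussSum hε a) (summable_gaussSum hε b) h0 h1)
            (exp_pos K).le
  have hGa := gaussSum_pos hε a
  have hGb := gaussSum_pos hε b
  have hlog := log_le_log (gaussSum_pos hε _) hG
  rw [log_mul (exp_pos K).ne' (by positivity), log_exp,
    log_mul (rpow_pos_of_pos hGa _).ne' (rpow_pos_of_pos hGb _).ne', log_rpow hGa,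
    log_rpow hGb] at hlog
  calc ε * log (gaussSum ε fun i => (1 - θ) * a i + θ * b i)
      ≤ ε * (K + ((1 - θ) * log (gaussSum ε a) + θ * log (gaussSum ε b))) :=
        mul_le_mul_of_nonneg_left hlog hε.le
    _ = _ := by
        simp only [K]
        field_simp
        ring

lemma cost_eq_of_proj_eq {x y : Torus d} {t : Fin d → ℝ} (h : proj t = x - y) :
    cost ε x y = -(ε * log ((2 * π * ε) ^ (-(d : ℝ) / 2))) - ε * log (gaussSum ε t) := by
  have hgker : gker ε (x - y) = (2 * π * ε) ^ (-(d : ℝ) / 2) * gaussSum ε t := by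
    rw [gaussSum_eq_of_proj_eq (h.trans (proj_lift _).symm)]
    rfl
  rw [cost, hgker, log_mul (by positivity) (gaussSum_pos hε t).ne']
  ring

end gaussSum

end Torus

theorem statement2_general (d : ℕ) (ε : ℝ) (hε : 0 < ε) (x : Torus d)
    (lam : ℝ) (hlam0 : 0 ≤ lam) (hlam1 : lam ≤ 1) (y₁ y₂ z : Torus d)
    (hz1 : tdist z y₁ = lam * tdist y₁ y₂)
    (hz2 : tdist z y₂ = (1 - lam) * tdist y₁ y₂) :
    cost ε x z ≥ (1 - lam) * cost ε x y₁ + lam * cost ε x y₂ -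
      1 / 2 * (lam * (1 - lam) * tdist y₁ y₂ ^ 2) := by
  obtain ⟨r, hr, hr_norm⟩ := exists_proj_eq_sqrt_eq_tdist z y₁
  obtain ⟨s, hs, hs_norm⟩ := exists_proj_eq_sqrt_eq_tdist z y₂
  have hD : tdist y₁ y₂ ≤ √(∑ i, (r i - s i) ^ 2) := by
    simpa only [Pi.sub_apply, sub_sq_comm (s _)] using
      tdist_le_of_proj_eq (t := s - r) (by simp [hr, hs])
  obtain ⟨hmid, hrs⟩ := convex_comb_eq_zero_of_sqrt_sum_sq hlam0 hlam1
    (hr_norm.trans hz1) (hs_norm.trans hz2) hD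
  set w := lift (x - z)
  have hw : (fun i => (1 - lam) * (w i + r i) + lam * (w i + s i)) = w :=
    funext fun i => by linear_combination hmid i
  have key := mul_log_gaussSum_convex_comb_le hε hlam0 hlam1 (w + r) (w + s)
  simp only [Pi.add_apply, add_sub_add_left_eq_sub, hw] at key
  rw [cost_eq_of_proj_eq hε (proj_lift (x - z)),
    cost_eq_of_proj_eq hε (t := w + r) (by simp [w, hr]),
    cost_eq_of_proj_eq hε (t := w + s) (by simp [w, hs])]
  linear_combination key + hrs / 2

/-- for every `ε > 0` and `x ∈ 𝕋^d`, the map `y ↦ c_ε(x,y)` is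
`1`-semiconcave on `𝕋^d`. -/
theorem statement2 (d : ℕ) (hd : 1 ≤ d) (ε : ℝ) (hε : 0 < ε) (x : Torus d)
    (lam : ℝ) (hlam0 : 0 ≤ lam) (hlam1 : lam ≤ 1) (y₁ y₂ z : Torus d)
    (hz1 : tdist z y₁ = lam * tdist y₁ y₂)
    (hz2 : tdist z y₂ = (1 - lam) * tdist y₁ y₂) :
    cost ε x z ≥ (1 - lam) * cost ε x y₁ + lam * cost ε x y₂ -
      1 / 2 * (lam * (1 - lam) * tdist y₁ y₂ ^ 2) :=
  statement2_general d ε hε x lam hlam0 hlam1 y₁ y₂ z hz1 hz2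
end
end

section
/- Let μ be a probability measure on 𝕋^d, ε > 0, φ, χ : 𝕋^d → ℝ continuous, and y ∈ 𝕋^d. Then the function F : ℝ → ℝ defined by F(λ) = 𝒯_μ^ε[φ + λχ](y) is twice differentiable on ℝ, and for every λ ∈ ℝ one has F'(λ) = −∫ χ dπ_y[φ + λχ] and F''(λ) = −(1/ε)·Var_{π_y[φ+λχ]}(χ). -/
open MeasureTheory Real

noncomputable section

open Torus
/-!
Write `π_y[φ]` as the exponential tilt of `μ` by `f = (φ - c_ε(·, y)) / ε`. Tilting `π_y[φ]` further
by `(λ/ε) χ` gives `π_y[φ + λχ]`, and `𝒯[φ + λχ](y) = 𝒯[φ](y) - ε K(λ/ε)`, where `K` is the cumulant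
generating function of `χ` under `π_y[φ]`. Since `χ` is bounded, `K` is analytic on all of `ℝ`,
with `K'(t)` the mean and `K''(t)` the variance of `χ` under the tilt of `π_y[φ]` by `t χ`; the
chain rule then gives both formulas. On the torus one only needs that the heat kernel is bounded,
so that `exp f` is `μ`-integrable.
-/

open ProbabilityTheory Set Topology

namespace ProbabilityTheory

variable {Ω : Type*} {mΩ : MeasurableSpace Ω} {μ : Measure Ω} {X f : Ω → ℝ} {t : ℝ}

lemma integrableExpSet_eq_univ_of_abs_le [IsFiniteMeasure μ] {C : ℝ} (hX : AEMeasurable X μ)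
    (hC : ∀ ω, |X ω| ≤ C) : integrableExpSet X μ = univ := by
  refine eq_univ_of_forall fun t => ?_
  refine Integrable.of_bound (by fun_prop) (exp (|t| * C)) (ae_of_all _ fun ω => ?_)
  rw [norm_of_nonneg (exp_nonneg _), exp_le_exp]
  calc t * X ω ≤ |t * X ω| := le_abs_self _
    _ = |t| * |X ω| := abs_mul _ _
    _ ≤ |t| * C := mul_le_mul_of_nonneg_left (hC ω) (abs_nonneg t)

lemma hasDerivAt_cgf (h : t ∈ interior (integrableExpSet X μ)) :
    HasDerivAt (cgf X μ) (μ.tilted (t * X ·))[X] t := by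
  rw [integral_tilted_mul_self h]
  exact (analyticAt_cgf h).differentiableAt.hasDerivAt

lemma hasDerivAt_integral_tilted_mul_self (h : t ∈ interior (integrableExpSet X μ)) :
    HasDerivAt (fun s => (μ.tilted (s * X ·))[X]) Var[X; μ.tilted (t * X ·)] t := by
  have h_eq : (fun s => (μ.tilted (s * X ·))[X]) =ᶠ[𝓝 t] deriv (cgf X μ) := by
    filter_upwards [isOpen_interior.eventually_mem h] with s hs using integral_tilted_mul_self hs
  rw [variance_tilted_mul h, iteratedDeriv_succ, iteratedDeriv_one]
  exact (analyticAt_cgf h).deriv.differentiableAt.hasDerivAt.congr_of_eventuallyEq h_eq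

lemma log_integral_exp_add_mul [NeZero μ] (hf : Integrable (fun ω => exp (f ω)) μ)
    (hft : Integrable (fun ω => exp (f ω + t * X ω)) μ) :
    log (∫ ω, exp (f ω + t * X ω) ∂μ)
      = log (∫ ω, exp (f ω) ∂μ) + cgf X (μ.tilted f) t := by
  rw [cgf, mgf, integral_exp_tilted]
  simp only [Pi.add_apply]
  rw [log_div (integral_exp_pos hft).ne' (integral_exp_pos hf).ne']
  ring

end ProbabilityTheory

lemma summable_prod_apply_of_nonneg {β : Type*} {d : ℕ} {f : Fin d → β → ℝ}
    (h0 : ∀ i b, 0 ≤ f i b) (hf : ∀ i, Summable (f i)) :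
    Summable fun k : Fin d → β => ∏ i, f i (k i) := by
  induction d with
  | zero => exact .of_finite
  | succ n ih =>
    have h_cons : Summable fun p : β × (Fin n → β) => f 0 p.1 * ∏ i : Fin n, f i.succ (p.2 i) := by
      apply Summable.mul_of_nonneg (hf 0) (ih (fun i => h0 i.succ) fun i => hf i.succ) (h0 0)
      exact fun k => Finset.prod_nonneg fun i _ => h0 _ _
    rw [← (Fin.consEquiv fun _ => β).summable_iff]
    refine h_cons.congr fun p => ?_
    simp only [Fin.consEquiv, Equiv.coe_fn_mk, Function.comp_apply, Fin.prod_univ_succ,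
      Fin.cons_zero, Fin.cons_succ]

namespace Torus

variable {d : ℕ} {ε : ℝ}

lemma lift_mem_Ico (x : Torus d) (i : Fin d) : lift x i ∈ Ico 0 (2 * π) := by
  have h := (AddCircle.equivIco (2 * π) 0 (x i)).2
  exact ⟨h.1, h.2.trans_eq (zero_add _)⟩

lemma measurable_lift (i : Fin d) : Measurable fun x : Torus d => lift x i :=
  (measurable_subtype_coe.comp (AddCircle.measurableEquivIco (2 * π) 0).measurable).comp
    (measurable_pi_apply i)

lemma two_pi_sq_mul_abs_sub_one_le {u : ℝ} (hu : u ∈ Ico 0 (2 * π)) (n : ℤ) :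
    (2 * π) ^ 2 * (|(n : ℝ)| - 1) ≤ (u - 2 * π * n) ^ 2 := by
  obtain ⟨hu₀, hu₁⟩ := hu
  have hπ := pi_pos
  rcases le_or_gt n 0 with hn | hn
  · have hn' : (n : ℝ) ≤ 0 := by exact_mod_cast hn
    calc (2 * π) ^ 2 * (|(n : ℝ)| - 1) ≤ (2 * π * n) ^ 2 := by
          rw [abs_of_nonpos hn']; nlinarith [sq_nonneg ((n : ℝ) + 1 / 2)]
      _ = (-(2 * π * n)) ^ 2 := (neg_sq _).symm
      _ ≤ (u - 2 * π * n) ^ 2 := by gcongr <;> nlinarith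
  · have hn' : (1 : ℝ) ≤ n := by exact_mod_cast hn
    -- no integer lies strictly between 1 and 2
    have h_int : (0 : ℝ) ≤ (n - 1) * (n - 2) := by
      rcases eq_or_lt_of_le hn' with h | h
      · rw [← h]; norm_num
      · have : (2 : ℝ) ≤ n := by exact_mod_cast (show (1 : ℤ) < n by exact_mod_cast h)
        nlinarith
    calc (2 * π) ^ 2 * (|(n : ℝ)| - 1) ≤ (2 * π * (n - 1)) ^ 2 := by
          rw [abs_of_pos (by linarith)]; nlinarith
      _ ≤ (2 * π * n - u) ^ 2 := by gcongr; nlinarith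
      _ = (u - 2 * π * n) ^ 2 := by ring

def gaussMajorant (ε : ℝ) (n : ℤ) : ℝ := exp ((2 * π) ^ 2 / (2 * ε) * (1 - |(n : ℝ)|))

lemma summable_gaussMajorant (hε : 0 < ε) : Summable (gaussMajorant ε) := by
  have hc : 0 < (2 * π) ^ 2 / (2 * ε) := by positivity
  have h_nat : Summable fun n : ℕ => exp ((2 * π) ^ 2 / (2 * ε) * (1 - n)) := by
    refine ((summable_exp_nat_mul_iff.2 (neg_neg_of_pos hc)).mul_left
      (exp ((2 * π) ^ 2 / (2 * ε)))).congr fun n => ?_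
    rw [← exp_add]
    ring_nf
  refine .of_nat_of_neg ?_ ?_ <;> simpa [gaussMajorant] using h_nat

lemma exp_neg_sq_div_le_gaussMajorant (hε : 0 < ε) {u : ℝ} (hu : u ∈ Ico 0 (2 * π)) (n : ℤ) :
    exp (-(u - 2 * π * n) ^ 2 / (2 * ε)) ≤ gaussMajorant ε n := by
  rw [gaussMajorant, exp_le_exp, div_mul_eq_mul_div, div_le_div_iff_of_pos_right (by positivity)]
  linarith [two_pi_sq_mul_abs_sub_one_le hu n]

lemma gker_term_le (hε : 0 < ε) (x : Torus d) (k : Fin d → ℤ) :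
    exp (-(∑ i, (lift x i - 2 * π * k i) ^ 2) / (2 * ε)) ≤ ∏ i, gaussMajorant ε (k i) := by
  rw [← Finset.sum_neg_distrib, Finset.sum_div, exp_sum]
  exact Finset.prod_le_prod (fun i _ => (exp_pos _).le)
    fun i _ => exp_neg_sq_div_le_gaussMajorant hε (lift_mem_Ico x i) (k i)

lemma gker_le (hε : 0 < ε) (x : Torus d) :
    gker ε x ≤ (2 * π * ε) ^ (-(d : ℝ) / 2) * ∑' k : Fin d → ℤ, ∏ i, gaussMajorant ε (k i) := by
  have h_summable : Summable fun k : Fin d → ℤ => ∏ i, gaussMajorant ε (k i) :=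
    summable_prod_apply_of_nonneg (fun _ n => (exp_pos _).le) fun _ => summable_gaussMajorant hε
  refine mul_le_mul_of_nonneg_left ?_ (by positivity)
  exact (h_summable.of_nonneg_of_le (fun k => (exp_pos _).le) (gker_term_le hε x)).tsum_le_tsum
    (gker_term_le hε x) h_summable

lemma gker_nonneg (hε : 0 ≤ ε) (x : Torus d) : 0 ≤ gker ε x :=
  mul_nonneg (by positivity) (tsum_nonneg fun _ => (exp_pos _).le)

lemma measurable_gker : Measurable (gker ε : Torus d → ℝ) := by
  refine .const_mul (.tsum fun k => ?_) _
  have := measurable_lift (d := d)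
  fun_prop

lemma measurable_cost_left (y : Torus d) : Measurable fun x => cost ε x y :=
  ((measurable_gker.comp (measurable_sub_const y)).log.const_mul ε).neg

variable {μ : Measure (Torus d)} {φ χ : Torus d → ℝ} {y : Torus d}

lemma integrable_exp_sub_cost_div [IsFiniteMeasure μ] (hε : 0 < ε) (hφ : Continuous φ)
    (y : Torus d) :
    Integrable (fun x => exp ((φ x - cost ε x y) / ε)) μ := by
  obtain ⟨C, hC⟩ := (isCompact_range hφ).bddAbove
  set M := (2 * π * ε) ^ (-(d : ℝ) / 2) * ∑' k : Fin d → ℤ, ∏ i, gaussMajorant ε (k i)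
  refine Integrable.of_bound ?_ (exp (C / ε + M)) (ae_of_all _ fun x => ?_)
  · exact (((hφ.measurable.sub (measurable_cost_left y)).div_const ε).exp).aestronglyMeasurable
  rw [norm_of_nonneg (exp_pos _).le, exp_le_exp]
  have h_log : log (gker ε (x - y)) ≤ M :=
    (log_le_self (gker_nonneg hε.le _)).trans (gker_le hε _)
  calc (φ x - cost ε x y) / ε = φ x / ε + log (gker ε (x - y)) := by
        rw [cost]; field_simp; ring
    _ ≤ C / ε + M := add_le_add (by gcongr; exact hC ⟨x, rfl⟩) h_log

lemma piY_eq_tilted : piY ε μ φ y = μ.tilted fun x => (φ x - cost ε x y) / ε := rfl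

lemma piY_add_mul [IsFiniteMeasure μ] (hε : 0 < ε) (hφ : Continuous φ) (s : ℝ) :
    piY ε μ (fun x => φ x + s * χ x) y = (piY ε μ φ y).tilted (s / ε * χ ·) := by
  rw [piY_eq_tilted, piY_eq_tilted, tilted_tilted (integrable_exp_sub_cost_div hε hφ y)]
  congr with x
  simp only [Pi.add_apply]
  ring

lemma Tmap_add_mul [IsProbabilityMeasure μ] (hε : 0 < ε) (hφ : Continuous φ) (hχ : Continuous χ)
    (s : ℝ) :
    Tmap ε μ (fun x => φ x + s * χ x) y = Tmap ε μ φ y - ε * cgf χ (piY ε μ φ y) (s / ε) := by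
  have h_exp : ∀ x, (φ x + s * χ x - cost ε x y) / ε = (φ x - cost ε x y) / ε + s / ε * χ x :=
    fun x => by ring
  have h_int := integrable_exp_sub_cost_div (μ := μ) hε
    (by fun_prop : Continuous fun x => φ x + s * χ x) y
  simp only [h_exp] at h_int
  rw [Tmap, Tmap]
  simp only [h_exp]
  rw [log_integral_exp_add_mul (integrable_exp_sub_cost_div hε hφ y) h_int, piY_eq_tilted]
  ring

end Torus

theorem statement4_general (d : ℕ) (ε : ℝ) (hε : 0 < ε)
    (μ : Measure (Torus d)) (hμ : IsProbabilityMeasure μ)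
    (φ χ : Torus d → ℝ) (hφ : Continuous φ) (hχ : Continuous χ) (y : Torus d) :
    ∀ lam : ℝ,
      HasDerivAt (fun s : ℝ => Tmap ε μ (fun x => φ x + s * χ x) y)
        (-(∫ x, χ x ∂(piY ε μ (fun x => φ x + lam * χ x) y))) lam ∧
      HasDerivAt (fun s : ℝ => -(∫ x, χ x ∂(piY ε μ (fun x => φ x + s * χ x) y)))
        (-(1 / ε) * Var (piY ε μ (fun x => φ x + lam * χ x) y) χ) lam := by
  intro lam
  have : IsProbabilityMeasure (piY ε μ φ y) :=
    isProbabilityMeasure_tilted (integrable_exp_sub_cost_div hε hφ y)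
  obtain ⟨C, hC⟩ := (isCompact_range (continuous_abs.comp hχ)).bddAbove
  have h_interior : ∀ t, t ∈ interior (integrableExpSet χ (piY ε μ φ y)) := by
    simp [integrableExpSet_eq_univ_of_abs_le hχ.aemeasurable fun x => hC ⟨x, rfl⟩]
  have h_scale : HasDerivAt (fun s => s / ε) (1 / ε) lam := (hasDerivAt_id lam).div_const ε
  simp_rw [piY_add_mul hε hφ, Tmap_add_mul hε hφ hχ]
  constructor
  · exact ((((hasDerivAt_cgf (h_interior _)).comp lam h_scale).const_mul ε).const_sub _).congr_deriv
      (by field_simp)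
  · rw [Var, ← variance_eq_integral hχ.aemeasurable]
    exact ((hasDerivAt_integral_tilted_mul_self (h_interior _)).comp lam h_scale).neg.congr_deriv
      (by ring)

/-- the map `F(λ) = 𝒯_μ^ε[φ + λχ](y)` is twice differentiable, with
`F'(λ) = -∫ χ dπ_y[φ + λχ]` and `F''(λ) = -(1/ε)·Var_{π_y[φ+λχ]}(χ)`. -/
theorem statement4 (d : ℕ) (hd : 1 ≤ d) (ε : ℝ) (hε : 0 < ε)
    (μ : Measure (Torus d)) (hμ : IsProbabilityMeasure μ)
    (φ χ : Torus d → ℝ) (hφ : Continuous φ) (hχ : Continuous χ) (y : Torus d) :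
    ∀ lam : ℝ,
      HasDerivAt (fun s : ℝ => Tmap ε μ (fun x => φ x + s * χ x) y)
        (-(∫ x, χ x ∂(piY ε μ (fun x => φ x + lam * χ x) y))) lam ∧
      HasDerivAt (fun s : ℝ => -(∫ x, χ x ∂(piY ε μ (fun x => φ x + s * χ x) y)))
        (-(1 / ε) * Var (piY ε μ (fun x => φ x + lam * χ x) y) χ) lam :=
  statement4_general d ε hε μ hμ φ χ hφ hχ y
end
end

section
/- Let ρ be a probability measure on 𝕋^d whose density satisfies 0 < m ≤ ρ(x) ≤ M < ∞ for all x ∈ 𝕋^d. Then for every r₀ > 0 there exist a finite family 𝓕 of open metric balls of radii less than r₀ whose union is 𝕋^d, and constants A ≥ 1 and κ > 0 depending only on d, m, M, r₀, such that: (i) for every x ∈ 𝕋^d, the number of balls B(x_Q, r_Q) ∈ 𝓕 such that x ∈ B(x_Q, 2r_Q) is at most A; and (ii) for every continuous f : 𝕋^d → ℝ, Var_ρ(f) ≤ κ·Σ_{Q∈𝓕} ρ(Q)·Var_{ρ_Q}(f). -/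
open MeasureTheory Real

noncomputable section

open Torus
/-!
Cover `𝕋^d` by the balls of radius `r₀ / 2` around the points of a uniform grid with `N + 1`
points per circle, fine enough that two neighbouring balls share a sup-metric cube of side
comparable to `r₀`; the lower density bound `m` gives each such overlap mass at least `β`.
On an overlap, the local means of `g` over two neighbouring balls differ by at most
`√(4 S / β)`, where `S = ∑ ρ(Q) Var_{ρ_Q}(g)`, and chaining along the grid bounds the distance
of every local mean to that of a fixed cell. The parallel-axis identity
`∫ (g - a)² dρ_Q = Var_{ρ_Q}(g) + (mean_Q g - a)²`, summed over the cover, then gives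
`Var_ρ(g) ≤ κ S`. The overlap count is at most the number of balls, `(N + 1)^d`.
-/

theorem Continuous.memLp_of_compactSpace {X E : Type*} [TopologicalSpace X] [CompactSpace X]
    [MeasurableSpace X] [OpensMeasurableSpace X] [NormedAddCommGroup E] {μ : Measure X}
    [IsFiniteMeasure μ] {f : X → E} (hf : Continuous f) (p : ENNReal) : MemLp f p μ :=
  hf.memLp_of_hasCompactSupport (.of_compactSpace f)

theorem Continuous.integrable_of_compactSpace {X E : Type*} [TopologicalSpace X]
    [CompactSpace X] [MeasurableSpace X] [OpensMeasurableSpace X] [NormedAddCommGroup E]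
    {μ : Measure X} [IsFiniteMeasure μ] {f : X → E} (hf : Continuous f) : Integrable f μ :=
  hf.integrable_of_hasCompactSupport (.of_compactSpace f)

theorem integral_le_sum_setIntegral_of_iUnion_eq_univ {α ι : Type*} [MeasurableSpace α]
    [Fintype ι] {μ : Measure α} {Q : ι → Set α} (hcov : ⋃ i, Q i = Set.univ) {h : α → ℝ}
    (hint : Integrable h μ) (hnonneg : 0 ≤ h) :
    ∫ x, h x ∂μ ≤ ∑ i, ∫ x in Q i, h x ∂μ := by
  have hle : μ ≤ Measure.sum fun i => μ.restrict (Q i) := by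
    simpa [hcov] using Measure.restrict_iUnion_le (μ := μ) (s := Q)
  rw [← integral_finsetSum_measure fun i _ => hint.integrableOn, ← Measure.sum_fintype]
  exact integral_mono_measure hle (.of_forall hnonneg)
    (by
      rw [Measure.sum_fintype]
      exact integrable_finsetSum_measure.2 fun i _ => hint.integrableOn)

theorem abs_sub_le_sum_mul_of_abs_sub_update_le {d N : ℕ} (F : (Fin d → Fin (N + 1)) → ℝ)
    {C : ℝ} (hF : ∀ z i (k : Fin (N + 1)), (k : ℕ) + 1 = z i →
      |F z - F (Function.update z i k)| ≤ C)
    (z : Fin d → Fin (N + 1)) : |F z - F 0| ≤ (∑ i, (z i : ℕ)) * C := by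
  induction h : ∑ i, (z i : ℕ) generalizing z with
  | zero =>
    have : z = 0 := funext fun i => Fin.ext (Finset.sum_eq_zero_iff.1 h i (Finset.mem_univ i))
    simp [this]
  | succ n ih =>
    obtain ⟨i, hi⟩ : ∃ i, (z i : ℕ) ≠ 0 := by
      by_contra! h0
      simp [h0] at h
    set k : Fin (N + 1) := ⟨z i - 1, by omega⟩
    have hk : (k : ℕ) + 1 = z i := by simp only [k]; omega
    have hsum : ∑ j, (Function.update z i k j : ℕ) = n := by
      have hz := Finset.add_sum_erase Finset.univ (fun j => (z j : ℕ)) (Finset.mem_univ i)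
      rw [← Finset.add_sum_erase _ _ (Finset.mem_univ i), Function.update_self,
        Finset.sum_congr rfl fun j hj => by
          rw [Function.update_of_ne (Finset.ne_of_mem_erase hj)]]
      omega
    calc |F z - F 0| ≤ |F z - F (Function.update z i k)| + |F (Function.update z i k) - F 0| :=
          abs_sub_le _ _ _
      _ ≤ C + n * C := add_le_add (hF z i k hk) (ih _ hsum)
      _ = (n + 1 : ℕ) * C := by push_cast; ring

namespace Torus

variable {d : ℕ}

section Geometry

theorem tdist_le_sqrt_sum_dist_sq (x y : Torus d) :
    tdist x y ≤ √(∑ i, dist (x i) (y i) ^ 2) := by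
  set w : Fin d → ℝ := fun i => lift x i - lift y i
  have hdist : ∀ i, dist (x i) (y i) = |w i - round ((2 * π)⁻¹ * w i) * (2 * π)| := by
    intro i
    have hlift : ∀ z : Torus d, ((lift z i : ℝ) : AddCircle (2 * π)) = z i :=
      fun z => (AddCircle.equivIco _ 0).symm_apply_apply (z i)
    rw [dist_eq_norm, ← hlift x, ← hlift y, ← AddCircle.coe_sub, AddCircle.norm_eq]
  refine (ciInf_le ⟨0, by rintro _ ⟨k, rfl⟩; positivity⟩
    fun i => round ((2 * π)⁻¹ * w i)).trans_eq ?_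
  congr 1
  refine Finset.sum_congr rfl fun i _ => ?_
  rw [hdist, sq_abs]
  ring

theorem tdist_le_sqrt_mul_dist (x y : Torus d) : tdist x y ≤ √d * dist x y := by
  refine (tdist_le_sqrt_sum_dist_sq x y).trans ?_
  calc √(∑ i, dist (x i) (y i) ^ 2) ≤ √(∑ _i : Fin d, dist x y ^ 2) := by
        gcongr with i
        exact dist_le_pi_dist x y i
    _ = √d * dist x y := by
        simp [Real.sqrt_mul (Nat.cast_nonneg d), Real.sqrt_sq dist_nonneg]

def circleGrid (N : ℕ) (j : Fin (N + 1)) : AddCircle (2 * π) :=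
  ((2 * π * j / (N + 1) : ℝ) : AddCircle (2 * π))

theorem dist_circleGrid_le (N : ℕ) (j k : Fin (N + 1)) :
    dist (circleGrid N j) (circleGrid N k) ≤ 2 * π / (N + 1) * |(j : ℝ) - k| := by
  rw [dist_eq_norm, circleGrid, circleGrid, ← AddCircle.coe_sub]
  refine (QuotientAddGroup.norm_mk_le_norm).trans_eq ?_
  rw [Real.norm_eq_abs, ← abs_of_pos (by positivity : 0 < 2 * π / (N + 1)), ← abs_mul]
  congr 1
  ring

theorem exists_dist_circleGrid_le (N : ℕ) (u : AddCircle (2 * π)) :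
    ∃ j : Fin (N + 1), dist (circleGrid N j) u ≤ 2 * π / (N + 1) := by
  obtain ⟨v, hv, rfl⟩ : ∃ v ∈ Set.Ico 0 (2 * π), (v : AddCircle (2 * π)) = u :=
    ⟨_, by simpa using (AddCircle.equivIco (2 * π) 0 u).2,
      (AddCircle.equivIco _ 0).symm_apply_apply u⟩
  set t := v * (N + 1) / (2 * π)
  have ht : 0 ≤ t := by have := hv.1; positivity
  have htN : t < N + 1 := by
    rw [div_lt_iff₀ (by positivity)]
    nlinarith [hv.2]
  refine ⟨⟨⌊t⌋₊, (Nat.floor_lt ht).2 (by exact_mod_cast htN)⟩, ?_⟩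
  rw [dist_eq_norm, circleGrid, ← AddCircle.coe_sub]
  refine QuotientAddGroup.norm_mk_le_norm.trans ?_
  have hsub : 2 * π * (⌊t⌋₊ : ℝ) / (N + 1) - v = 2 * π / (N + 1) * (⌊t⌋₊ - t) := by
    simp only [t]
    field_simp
  have hfloor := Nat.floor_le ht
  have hfloor' := Nat.lt_floor_add_one t
  rw [Fin.val_mk, hsub, Real.norm_eq_abs, abs_mul, abs_of_pos (by positivity),
    abs_of_nonpos (by linarith)]
  exact mul_le_of_le_one_right (by positivity) (by linarith)

def torusGrid (N : ℕ) (z : Fin d → Fin (N + 1)) : Torus d := fun i => circleGrid N (z i)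

theorem exists_dist_torusGrid_le (N : ℕ) (x : Torus d) :
    ∃ z, dist (torusGrid N z) x ≤ 2 * π / (N + 1) := by
  choose z hz using fun i => exists_dist_circleGrid_le N (x i)
  exact ⟨z, (dist_pi_le_iff (by positivity)).2 hz⟩

theorem dist_torusGrid_update_le (N : ℕ) (z : Fin d → Fin (N + 1)) (i : Fin d)
    (k : Fin (N + 1)) (hk : (k : ℕ) + 1 = z i) :
    dist (torusGrid N z) (torusGrid N (Function.update z i k)) ≤ 2 * π / (N + 1) := by
  refine (dist_pi_le_iff (by positivity)).2 fun j => ?_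
  rcases eq_or_ne j i with rfl | hj
  · refine (dist_circleGrid_le N _ _).trans_eq ?_
    rw [Function.update_self, ← hk]
    simp
  · simp only [torusGrid, Function.update_of_ne hj, dist_self]
    positivity

end Geometry

section Density

theorem ofReal_mul_volume_le {ρ : Measure (Torus d)} {f : Torus d → ℝ} {m : ℝ}
    (hρ : HasDensity ρ f) (hf : ∀ x, m ≤ f x) (A : Set (Torus d)) :
    ENNReal.ofReal m * volume A ≤ ρ A := by
  rw [hρ, withDensity_apply', ← setLIntegral_const]
  exact lintegral_mono fun x => ENNReal.ofReal_le_ofReal (hf x)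

theorem volume_closedBall (x : Torus d) {r : ℝ} (hr : 0 ≤ r) :
    volume (Metric.closedBall x r) = ENNReal.ofReal (min (2 * π) (2 * r)) ^ d := by
  simp [closedBall_pi x hr, volume_pi_pi, AddCircle.volume_closedBall]

theorem le_toReal_measure_closedBall {ρ : Measure (Torus d)} [IsFiniteMeasure ρ]
    {f : Torus d → ℝ} {m : ℝ} (hρ : HasDensity ρ f) (hf : ∀ x, m ≤ f x) (hm : 0 ≤ m)
    (x : Torus d) {r : ℝ} (hr : 0 ≤ r) :
    m * min (2 * π) (2 * r) ^ d ≤ (ρ (Metric.closedBall x r)).toReal := by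
  have h := ofReal_mul_volume_le hρ hf (Metric.closedBall x r)
  rw [volume_closedBall x hr] at h
  have h' := ENNReal.toReal_mono (measure_ne_top ρ _) h
  rwa [ENNReal.toReal_mul, ENNReal.toReal_pow, ENNReal.toReal_ofReal hm,
    ENNReal.toReal_ofReal (by positivity)] at h'

end Density

section Variance

theorem var_nonneg (μ : Measure (Torus d)) (g : Torus d → ℝ) : 0 ≤ Var μ g :=
  integral_nonneg fun _ => sq_nonneg _

variable {μ ρ : Measure (Torus d)} {g : Torus d → ℝ}

theorem var_eq_variance (hg : AEMeasurable g μ) : Var μ g = ProbabilityTheory.variance g μ :=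
  (ProbabilityTheory.variance_eq_integral hg).symm

theorem integral_sub_sq_eq_var_add [IsProbabilityMeasure μ] (hg : MemLp g 2 μ) (a : ℝ) :
    ∫ x, (g x - a) ^ 2 ∂μ = Var μ g + (∫ x, g x ∂μ - a) ^ 2 := by
  rw [var_eq_variance hg.aemeasurable,
    ← ProbabilityTheory.variance_sub_const hg.aestronglyMeasurable a,
    ProbabilityTheory.variance_eq_sub (X := fun x => g x - a) (hg.sub (memLp_const a)),
    integral_sub (hg.integrable one_le_two) (integrable_const a)]
  simp

theorem setIntegral_sub_sq_eq [IsFiniteMeasure ρ] (hg : Continuous g) (Q : Set (Torus d))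
    (a : ℝ) :
    ∫ x in Q, (g x - a) ^ 2 ∂ρ =
      (ρ Q).toReal * (Var (normRestrict ρ Q) g + (∫ x, g x ∂normRestrict ρ Q - a) ^ 2) := by
  by_cases h0 : ρ Q = 0
  · simp [Measure.restrict_eq_zero.2 h0, h0]
  have : IsProbabilityMeasure (normRestrict ρ Q) :=
    ProbabilityTheory.cond_isProbabilityMeasure h0
  rw [← integral_sub_sq_eq_var_add (hg.memLp_of_compactSpace 2) a, normRestrict,
    integral_smul_measure, smul_eq_mul, ENNReal.toReal_inv, ← mul_assoc,
    mul_inv_cancel₀ (ENNReal.toReal_ne_zero.2 ⟨h0, measure_ne_top ρ Q⟩), one_mul]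

theorem toReal_mul_var_normRestrict [IsFiniteMeasure ρ] (hg : Continuous g)
    (Q : Set (Torus d)) :
    (ρ Q).toReal * Var (normRestrict ρ Q) g =
      ∫ x in Q, (g x - ∫ y, g y ∂normRestrict ρ Q) ^ 2 ∂ρ := by
  simp [setIntegral_sub_sq_eq hg]

theorem toReal_measure_inter_mul_sq_sub_le [IsFiniteMeasure ρ] (hg : Continuous g)
    (Q Q' : Set (Torus d)) :
    (ρ (Q ∩ Q')).toReal * (∫ x, g x ∂normRestrict ρ Q - ∫ x, g x ∂normRestrict ρ Q') ^ 2 ≤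
      2 * ((ρ Q).toReal * Var (normRestrict ρ Q) g
        + (ρ Q').toReal * Var (normRestrict ρ Q') g) := by
  set c := ∫ x, g x ∂normRestrict ρ Q
  set c' := ∫ x, g x ∂normRestrict ρ Q'
  have hint : ∀ b, Integrable (fun x => (g x - b) ^ 2) ρ :=
    fun b => ((hg.sub continuous_const).pow 2).integrable_of_compactSpace
  have hmono : ∀ (s t : Set (Torus d)) (b : ℝ), s ⊆ t →
      ∫ x in s, (g x - b) ^ 2 ∂ρ ≤ ∫ x in t, (g x - b) ^ 2 ∂ρ := fun _ _ b hst =>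
    setIntegral_mono_set (hint b).integrableOn (.of_forall fun _ => sq_nonneg _)
      hst.eventuallyLE
  rw [toReal_mul_var_normRestrict hg, toReal_mul_var_normRestrict hg]
  calc (ρ (Q ∩ Q')).toReal * (c - c') ^ 2 = ∫ _ in Q ∩ Q', (c - c') ^ 2 ∂ρ := by
        rw [setIntegral_const, smul_eq_mul, measureReal_def]
    _ ≤ ∫ x in Q ∩ Q', (2 * (g x - c) ^ 2 + 2 * (g x - c') ^ 2) ∂ρ :=
        setIntegral_mono (integrable_const _)
          (((hint c).const_mul 2).add ((hint c').const_mul 2)).integrableOn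
          fun x => by nlinarith [sq_nonneg (g x - c + (g x - c'))]
    _ = 2 * ∫ x in Q ∩ Q', (g x - c) ^ 2 ∂ρ + 2 * ∫ x in Q ∩ Q', (g x - c') ^ 2 ∂ρ := by
        rw [integral_add ((hint c).const_mul 2).integrableOn
          ((hint c').const_mul 2).integrableOn, integral_const_mul, integral_const_mul]
    _ ≤ _ := by
        linarith [hmono (Q ∩ Q') Q c Set.inter_subset_left,
          hmono (Q ∩ Q') Q' c' Set.inter_subset_right]

theorem var_le_sum_of_iUnion_eq_univ [IsProbabilityMeasure ρ] {ι : Type*} [Fintype ι]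
    {Q : ι → Set (Torus d)} (hcov : ⋃ i, Q i = Set.univ) (hg : Continuous g) (a : ℝ) :
    Var ρ g ≤ ∑ i, (ρ (Q i)).toReal *
      (Var (normRestrict ρ (Q i)) g + (∫ x, g x ∂normRestrict ρ (Q i) - a) ^ 2) := by
  calc Var ρ g ≤ ∫ x, (g x - a) ^ 2 ∂ρ := by
        rw [integral_sub_sq_eq_var_add (hg.memLp_of_compactSpace 2)]
        exact le_add_of_nonneg_right (sq_nonneg _)
    _ ≤ ∑ i, ∫ x in Q i, (g x - a) ^ 2 ∂ρ :=
        integral_le_sum_setIntegral_of_iUnion_eq_univ hcov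
          ((hg.sub continuous_const).pow 2).integrable_of_compactSpace fun _ => sq_nonneg _
    _ = _ := Finset.sum_congr rfl fun i _ => setIntegral_sub_sq_eq hg (Q i) a

theorem sq_integral_normRestrict_sub_le [IsFiniteMeasure ρ] {N : ℕ}
    {Q : (Fin d → Fin (N + 1)) → Set (Torus d)} {β : ℝ} (hβ : 0 < β)
    (hadj : ∀ z i (k : Fin (N + 1)), (k : ℕ) + 1 = z i →
      β ≤ (ρ (Q z ∩ Q (Function.update z i k))).toReal)
    (hg : Continuous g) (z : Fin d → Fin (N + 1)) :
    (∫ x, g x ∂normRestrict ρ (Q z) - ∫ x, g x ∂normRestrict ρ (Q 0)) ^ 2 ≤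
      (d * N) ^ 2 * (4 * (∑ w, (ρ (Q w)).toReal * Var (normRestrict ρ (Q w)) g) / β) := by
  set mean := fun z => ∫ x, g x ∂normRestrict ρ (Q z)
  set S := ∑ w, (ρ (Q w)).toReal * Var (normRestrict ρ (Q w)) g
  have hterm : ∀ w, (ρ (Q w)).toReal * Var (normRestrict ρ (Q w)) g ≤ S := fun w =>
    Finset.single_le_sum (f := fun w => (ρ (Q w)).toReal * Var (normRestrict ρ (Q w)) g)
      (fun w _ => mul_nonneg ENNReal.toReal_nonneg (var_nonneg _ g)) (Finset.mem_univ w)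
  have hS : 0 ≤ S := (mul_nonneg ENNReal.toReal_nonneg (var_nonneg _ g)).trans (hterm 0)
  have hstep : ∀ z i (k : Fin (N + 1)), (k : ℕ) + 1 = z i →
      |mean z - mean (Function.update z i k)| ≤ √(4 * S / β) := by
    intro z i k hk
    rw [← Real.sqrt_sq_eq_abs]
    refine Real.sqrt_le_sqrt ((le_div_iff₀ hβ).2 ?_)
    have h := toReal_measure_inter_mul_sq_sub_le (ρ := ρ) hg (Q z) (Q (Function.update z i k))
    nlinarith [mul_le_mul_of_nonneg_left (hadj z i k hk)
      (sq_nonneg (mean z - mean (Function.update z i k))), hterm z, hterm (Function.update z i k)]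
  have hlen : ((∑ i, (z i : ℕ) : ℕ) : ℝ) ≤ d * N := by
    have : ∑ i, (z i : ℕ) ≤ d * N :=
      (Finset.sum_le_card_nsmul _ _ N fun i _ => Nat.lt_succ_iff.1 (z i).2).trans (by simp)
    exact_mod_cast this
  calc (mean z - mean 0) ^ 2 = |mean z - mean 0| ^ 2 := (sq_abs _).symm
    _ ≤ (d * N * √(4 * S / β)) ^ 2 := by
        gcongr
        exact (abs_sub_le_sum_mul_of_abs_sub_update_le mean hstep z).trans
          (mul_le_mul_of_nonneg_right hlen (Real.sqrt_nonneg _))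
    _ = _ := by rw [mul_pow, Real.sq_sqrt (by positivity)]

-- `(N + 1) ^ d` cells, chains of length at most `d * N` to the cell `0`, and `4 / β` per step
def gridVarConst (d N : ℕ) (β : ℝ) : ℝ := 1 + 4 * (N + 1) ^ d * (d * N) ^ 2 / β

theorem var_le_gridVarConst_mul [IsProbabilityMeasure ρ] {N : ℕ}
    {Q : (Fin d → Fin (N + 1)) → Set (Torus d)} (hcov : ⋃ z, Q z = Set.univ) {β : ℝ}
    (hβ : 0 < β) (hadj : ∀ z i (k : Fin (N + 1)), (k : ℕ) + 1 = z i →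
      β ≤ (ρ (Q z ∩ Q (Function.update z i k))).toReal)
    (hg : Continuous g) :
    Var ρ g ≤ gridVarConst d N β * ∑ z, (ρ (Q z)).toReal * Var (normRestrict ρ (Q z)) g := by
  set S := ∑ z, (ρ (Q z)).toReal * Var (normRestrict ρ (Q z)) g
  calc Var ρ g ≤ ∑ z, (ρ (Q z)).toReal * (Var (normRestrict ρ (Q z)) g +
        (∫ x, g x ∂normRestrict ρ (Q z) - ∫ x, g x ∂normRestrict ρ (Q 0)) ^ 2) :=
        var_le_sum_of_iUnion_eq_univ hcov hg _
    _ ≤ ∑ z, ((ρ (Q z)).toReal * Var (normRestrict ρ (Q z)) g + (d * N) ^ 2 * (4 * S / β)) := by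
        refine Finset.sum_le_sum fun z _ => ?_
        rw [mul_add]
        have hρ1 : (ρ (Q z)).toReal ≤ 1 := by simpa [measureReal_def] using measureReal_le_one
        exact add_le_add_right ((mul_le_mul hρ1 (sq_integral_normRestrict_sub_le hβ hadj hg z)
          (sq_nonneg _) zero_le_one).trans_eq (one_mul _)) _
    _ = gridVarConst d N β * S := by
        rw [Finset.sum_add_distrib, Finset.sum_const, Finset.card_univ, Fintype.card_fun,
          Fintype.card_fin, Fintype.card_fin, gridVarConst, nsmul_eq_mul]
        push_cast
        field_simp
        ring

end Variance

section Cover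

def gridStep (d : ℕ) (r₀ : ℝ) : ℝ := r₀ / (4 * (√d + 1))

def gridSize (d : ℕ) (r₀ : ℝ) : ℕ := ⌈2 * π / gridStep d r₀⌉₊

variable {r₀ : ℝ}

theorem gridStep_pos (hr₀ : 0 < r₀) : 0 < gridStep d r₀ := by
  unfold gridStep
  positivity

theorem two_pi_div_gridSize_le (hr₀ : 0 < r₀) :
    2 * π / (gridSize d r₀ + 1) ≤ gridStep d r₀ := by
  rw [div_le_iff₀ (by positivity), ← div_le_iff₀' (gridStep_pos hr₀)]
  exact (Nat.le_ceil _).trans (by simp [gridSize])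

theorem tdist_lt_of_dist_le (hr₀ : 0 < r₀) {x y : Torus d} (h : dist x y ≤ 2 * gridStep d r₀) :
    tdist x y < r₀ / 2 := by
  calc tdist x y ≤ √d * dist x y := tdist_le_sqrt_mul_dist x y
    _ ≤ √d * (2 * gridStep d r₀) := by gcongr
    _ = r₀ / 2 * (√d / (√d + 1)) := by
        unfold gridStep
        field_simp
        ring
    _ < r₀ / 2 :=
        mul_lt_of_lt_one_right (by positivity) ((div_lt_one (by positivity)).2 (by linarith))

theorem iUnion_tdist_torusGrid_lt_eq_univ (hr₀ : 0 < r₀) :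
    ⋃ z, {x : Torus d | tdist (torusGrid (gridSize d r₀) z) x < r₀ / 2} = Set.univ := by
  refine Set.eq_univ_of_forall fun x => Set.mem_iUnion.2 ?_
  obtain ⟨z, hz⟩ := exists_dist_torusGrid_le (gridSize d r₀) x
  exact ⟨z, tdist_lt_of_dist_le hr₀ (by
    linarith [two_pi_div_gridSize_le (d := d) hr₀, gridStep_pos (d := d) hr₀])⟩

theorem closedBall_torusGrid_subset (hr₀ : 0 < r₀) (z : Fin d → Fin (gridSize d r₀ + 1))
    (i : Fin d) (k : Fin (gridSize d r₀ + 1)) (hk : (k : ℕ) + 1 = z i) :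
    Metric.closedBall (torusGrid (gridSize d r₀) z) (gridStep d r₀) ⊆
      {x | tdist (torusGrid (gridSize d r₀) z) x < r₀ / 2} ∩
        {x | tdist (torusGrid (gridSize d r₀) (Function.update z i k)) x < r₀ / 2} := by
  intro x hx
  rw [Metric.mem_closedBall, dist_comm] at hx
  have hstep := two_pi_div_gridSize_le (d := d) hr₀
  have hpos := gridStep_pos (d := d) hr₀
  have hadj := dist_torusGrid_update_le (gridSize d r₀) z i k hk
  rw [dist_comm] at hadj
  exact ⟨tdist_lt_of_dist_le hr₀ (by linarith),
    tdist_lt_of_dist_le hr₀ ((dist_triangle _ _ x).trans (by linarith))⟩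

end Cover

end Torus

theorem statement9_general (d : ℕ) :
    ∃ A κ : ℝ → ℝ → ℝ → ℝ,
      ∀ (m M : ℝ), 0 < m → m ≤ M →
      ∀ (ρ : Measure (Torus d)), IsProbabilityMeasure ρ →
      ∀ f : Torus d → ℝ, HasDensity ρ f → (∀ x, m ≤ f x ∧ f x ≤ M) →
      ∀ r₀ : ℝ, 0 < r₀ →
        1 ≤ A m M r₀ ∧ 0 < κ m M r₀ ∧
        ∃ (n : ℕ) (c : Fin n → Torus d) (rad : Fin n → ℝ),
          (∀ i, 0 < rad i ∧ rad i < r₀) ∧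
          (⋃ i, {x | tdist (c i) x < rad i}) = Set.univ ∧
          (∀ x : Torus d,
            (({i : Fin n | tdist (c i) x < 2 * rad i}.ncard : ℝ) ≤ A m M r₀)) ∧
          (∀ g : Torus d → ℝ, Continuous g →
            Var ρ g ≤ κ m M r₀ *
              ∑ i : Fin n, (ρ {x | tdist (c i) x < rad i}).toReal *
                Var (normRestrict ρ {x | tdist (c i) x < rad i}) g) := by
  refine ⟨fun _ _ r₀ => (gridSize d r₀ + 1 : ℝ) ^ d, fun m _ r₀ =>
    gridVarConst d (gridSize d r₀) (m * min (2 * π) (2 * gridStep d r₀) ^ d), ?_⟩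
  intro m M hm _ ρ _ f hρ hf r₀ hr₀
  set N := gridSize d r₀
  have hβ : 0 < m * min (2 * π) (2 * gridStep d r₀) ^ d := by
    have := gridStep_pos (d := d) hr₀
    positivity
  let e := Fintype.equivFin (Fin d → Fin (N + 1))
  refine ⟨one_le_pow₀ (by simp), by unfold gridVarConst; positivity, _,
    fun i => torusGrid N (e.symm i), fun _ => r₀ / 2, fun _ => ⟨by positivity, by linarith⟩,
    ?_, fun x => ?_, fun g hg => ?_⟩
  · rw [e.symm.surjective.iUnion_comp fun z => {x | tdist (torusGrid N z) x < r₀ / 2}]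
    exact iUnion_tdist_torusGrid_lt_eq_univ hr₀
  · calc (_ : ℝ) ≤ Fintype.card (Fin d → Fin (N + 1)) := by
          exact_mod_cast (Set.ncard_le_card _).trans (by simp)
      _ = _ := by simp [N]
  · rw [e.symm.sum_comp fun z => (ρ {x | tdist (torusGrid N z) x < r₀ / 2}).toReal *
      Var (normRestrict ρ {x | tdist (torusGrid N z) x < r₀ / 2}) g]
    refine var_le_gridVarConst_mul (iUnion_tdist_torusGrid_lt_eq_univ hr₀) hβ
      (fun z i k hk => ?_) hg
    exact (le_toReal_measure_closedBall hρ (fun x => (hf x).1) hm.le _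
      (gridStep_pos hr₀).le).trans
      (ENNReal.toReal_mono (measure_ne_top ρ _)
        (measure_mono (closedBall_torusGrid_subset hr₀ z i k hk)))

/-- Boman-type covering and variance decomposition: for a probability
measure `ρ` on `𝕋^d` with density in `[m, M]` and any `r₀ > 0`, there are a finite cover
of `𝕋^d` by open balls of radii `< r₀`, and constants `A ≥ 1`, `κ > 0` depending only on
`d, m, M, r₀`, such that the `2`-enlarged balls have overlap at most `A` and the variance
of every continuous `f` is bounded by `κ` times the sum of localized variances. -/
theorem statement9 (d : ℕ) (hd : 1 ≤ d) :
    ∃ A κ : ℝ → ℝ → ℝ → ℝ,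
      ∀ (m M : ℝ), 0 < m → m ≤ M →
      ∀ (ρ : Measure (Torus d)), IsProbabilityMeasure ρ →
      ∀ f : Torus d → ℝ, HasDensity ρ f → (∀ x, m ≤ f x ∧ f x ≤ M) →
      ∀ r₀ : ℝ, 0 < r₀ →
        1 ≤ A m M r₀ ∧ 0 < κ m M r₀ ∧
        ∃ (n : ℕ) (c : Fin n → Torus d) (rad : Fin n → ℝ),
          (∀ i, 0 < rad i ∧ rad i < r₀) ∧
          (⋃ i, {x | tdist (c i) x < rad i}) = Set.univ ∧
          (∀ x : Torus d,
            (({i : Fin n | tdist (c i) x < 2 * rad i}.ncard : ℝ) ≤ A m M r₀)) ∧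
          (∀ g : Torus d → ℝ, Continuous g →
            Var ρ g ≤ κ m M r₀ *
              ∑ i : Fin n, (ρ {x | tdist (c i) x < rad i}).toReal *
                Var (normRestrict ρ {x | tdist (c i) x < rad i}) g) :=
  statement9_general d
end
end
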